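/- arXiv:2604.04567 — 2 statements merged into one kernel-verified Lean document; each statement's English description precedes it below -/
import Mathlib

section
/- Let X be a random vector in ℝᵈ with distribution P_X, and M a random missingness pattern in {0,1}ᵈ. For any candidate distribution Q on ℝᵈ, under the MAR condition P(M = m | X = x) = P(M = m | x^{(m)}) for all m and x, the expected KL divergence E_M[KL(P_{X|M}^{(M)} ‖ Q^{(M)})] decomposes as a term depending only on the marginals plus E_M[∫ log(P(M=m|x^{(m)})/P(M=m)) dP_{X|M=m}^{(m)}], where the second summand does not depend on Q; concretely, Σ_m P(M=m) ∫ log(π_m^{(m)}/q^{(m)}) π_m^{(m)} = Σ_m ∫ log(π^{(m)}/q^{(m)}) π^{(m)}(x^{(m)}) P(M=m|x^{(m)}) dx^{(m)} + C, where C is independent of q. -/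
open MeasureTheory

/-- Decomposition of the expected KL objective under MAR. For each pattern `m` in a finite
set, `π_m^{(m)}` (density of the observed subvector given `M = m`), the marginal `π^{(m)}`,
and the MAR weight `P(M = m | x^{(m)})` satisfy the Bayes relation
`π_m^{(m)} = π^{(m)} P(M=m|x^{(m)}) / P(M=m)`.  Then there is a constant `C`, independent
of the candidate densities `q^{(m)}`, such that
`Σ_m P(M=m) ∫ log(π_m^{(m)}/q^{(m)}) π_m^{(m)}
  = Σ_m ∫ log(π^{(m)}/q^{(m)}) π^{(m)} P(M=m|x^{(m)}) + C`. -/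
theorem stmt_12 {ι : Type*} [Fintype ι] (k : ι → ℕ)
    (p : ι → ℝ) (hp : ∀ m, 0 < p m)
    (πmar πm : (m : ι) → (Fin (k m) → ℝ) → ℝ)
    (Pm : (m : ι) → (Fin (k m) → ℝ) → ℝ)
    (hπpos : ∀ m x, 0 < πmar m x) (hPmpos : ∀ m x, 0 < Pm m x)
    (hbayes : ∀ m x, πm m x = πmar m x * Pm m x / p m) :
    ∃ C : ℝ, ∀ q : (m : ι) → (Fin (k m) → ℝ) → ℝ,
      (∀ m x, 0 < q m x) →
      (∀ m, Integrable (fun x => Real.log (πm m x / q m x) * πm m x)) →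
      (∀ m, Integrable (fun x => Real.log (πmar m x / q m x) * πmar m x * Pm m x)) →
      ∑ m, p m * ∫ x, Real.log (πm m x / q m x) * πm m x =
        (∑ m, ∫ x, Real.log (πmar m x / q m x) * πmar m x * Pm m x) + C := by
  refine ⟨∑ m, ∫ x, Real.log (Pm m x / p m) * (πmar m x * Pm m x), ?_⟩
  intro q hq hint1 hint2
  have key : ∀ m x, Real.log (Pm m x / p m) * (πmar m x * Pm m x) =
      p m * (Real.log (πm m x / q m x) * πm m x)
        - Real.log (πmar m x / q m x) * πmar m x * Pm m x := by
    intro m x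
    have ha := hπpos m x
    have hb := hPmpos m x
    have hc := hp m
    have hd := hq m x
    rw [hbayes m x]
    have h1 : Real.log (πmar m x * Pm m x / p m / q m x)
        = Real.log (πmar m x) + Real.log (Pm m x) - Real.log (p m) - Real.log (q m x) := by
      rw [Real.log_div (by positivity) hd.ne', Real.log_div (by positivity) hc.ne',
        Real.log_mul ha.ne' hb.ne']
    have h2 : Real.log (Pm m x / p m) = Real.log (Pm m x) - Real.log (p m) :=
      Real.log_div hb.ne' hc.ne'
    have h3 : Real.log (πmar m x / q m x) = Real.log (πmar m x) - Real.log (q m x) :=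
      Real.log_div ha.ne' hd.ne'
    rw [h1, h2, h3]
    field_simp
    ring
  have hkey_int : ∀ m, (∫ x, Real.log (Pm m x / p m) * (πmar m x * Pm m x)) =
      p m * (∫ x, Real.log (πm m x / q m x) * πm m x)
        - ∫ x, Real.log (πmar m x / q m x) * πmar m x * Pm m x := by
    intro m
    have : (∫ x, Real.log (Pm m x / p m) * (πmar m x * Pm m x)) =
        ∫ x, (p m * (Real.log (πm m x / q m x) * πm m x)
          - Real.log (πmar m x / q m x) * πmar m x * Pm m x) := by
      congr 1; funext x; exact key m x
    rw [this, integral_sub ((hint1 m).const_mul (p m)) (hint2 m), MeasureTheory.integral_const_mul]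
  simp only [hkey_int]
  rw [Finset.sum_sub_distrib]
  ring
end

section
/- Under MAR and the positivity condition P(M = 0 | X = x) > 0 for P_X-almost every x (where 0 denotes the fully-observed pattern), the true distribution P_X is the unique minimizer over probability distributions Q of the objective E_{M}[KL(P_{X|M}^{(M)} ‖ Q^{(M)})], and the minimum value satisfies: the Q-dependent part Σ_m ∫ log(π^{(m)}/q^{(m)}) π^{(m)} P(M=m | x^{(m)}) dx^{(m)} is ≥ 0 with equality iff Q = P_X. -/
open MeasureTheory

/-- Marginal density of the observed subvector `x^{(S)}` (coordinates in `S`) obtained by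
integrating out the unobserved coordinates. -/
noncomputable def marg {d : ℕ} (f : (Fin d → ℝ) → ℝ) (S : Finset (Fin d))
    (y : {j : Fin d // j ∈ S} → ℝ) : ℝ :=
  ∫ z : {j : Fin d // j ∉ S} → ℝ, f (fun j => if h : j ∈ S then y ⟨j, h⟩ else z ⟨j, h⟩)

/-- `P(M = S) = ∫ π^{(S)}(y) P(M = S | y) dy`, the probability of observing exactly the
coordinates in `S`, where the weight `w S` gives `P(M = S | x^{(S)})` (MAR). -/
noncomputable def patternProb {d : ℕ} (π : (Fin d → ℝ) → ℝ)
    (w : (S : Finset (Fin d)) → ({j : Fin d // j ∈ S} → ℝ) → ℝ) (S : Finset (Fin d)) : ℝ :=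
  ∫ y : {j : Fin d // j ∈ S} → ℝ, marg π S y * w S y

/-- The expected KL objective `E_M[KL(P_{X|M}^{(M)} ‖ Q^{(M)})]`, written via the Bayes
identity `π_S^{(S)} = π^{(S)} w_S / P(M=S)` valid under MAR. -/
noncomputable def objective {d : ℕ} (𝓜 : Finset (Finset (Fin d)))
    (π : (Fin d → ℝ) → ℝ)
    (w : (S : Finset (Fin d)) → ({j : Fin d // j ∈ S} → ℝ) → ℝ)
    (q : (Fin d → ℝ) → ℝ) : ℝ :=
  ∑ S ∈ 𝓜, patternProb π w S *
    ∫ y : {j : Fin d // j ∈ S} → ℝ,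
      Real.log ((marg π S y * w S y / patternProb π w S) / marg q S y) *
        (marg π S y * w S y / patternProb π w S)

/-- The `q`-dependent part of the objective,
`Σ_m ∫ log(π^{(m)}/q^{(m)}) π^{(m)} P(M=m|x^{(m)}) dx^{(m)}`. -/
noncomputable def qPart {d : ℕ} (𝓜 : Finset (Finset (Fin d)))
    (π : (Fin d → ℝ) → ℝ)
    (w : (S : Finset (Fin d)) → ({j : Fin d // j ∈ S} → ℝ) → ℝ)
    (q : (Fin d → ℝ) → ℝ) : ℝ :=
  ∑ S ∈ 𝓜, ∫ y : {j : Fin d // j ∈ S} → ℝ,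
    Real.log (marg π S y / marg q S y) * marg π S y * w S y

/-!
For `a, b > 0` one has `b * klFun (a / b) = log (a / b) * a - (a - b) ≥ 0`, with equality iff
`a = b` (Gibbs). Apply this to the marginals `a = π^{(S)}`, `b = q^{(S)}` and integrate against
the weight `w S`. The correction terms `∫ (π^{(S)} - q^{(S)}) w_S` sum to `∫ π - ∫ q = 0`: by MAR,
`∫ π^{(S)} w_S = ∫ π(x) w_S(x^{(S)}) dx`, and the weights sum to one pointwise. So the
`q`-dependent part is a sum of nonnegative integrals `∫ q^{(S)} klFun (π^{(S)} / q^{(S)}) w_S`.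
If it vanishes, so does the term of the fully observed pattern `S = univ`, whose marginals are
`π` and `q` themselves; as `w univ > 0` a.e., this forces `q = π` a.e. Finally, by Bayes'
identity the objective exceeds its value at `π` by exactly this `q`-dependent part.
-/

open InformationTheory

section Marginal

variable {d : ℕ}

noncomputable def splitObserved (S : Finset (Fin d)) :
    (Fin d → ℝ) ≃ᵐ (({j : Fin d // j ∈ S} → ℝ) × ({j : Fin d // j ∉ S} → ℝ)) :=
  MeasurableEquiv.piEquivPiSubtypeProd (fun _ : Fin d => ℝ) (fun j : Fin d => j ∈ S)

lemma measurePreserving_splitObserved (S : Finset (Fin d)) :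
    MeasurePreserving (splitObserved S) volume (volume.prod volume) := by
  refine ⟨(splitObserved S).measurable, ?_⟩
  rw [← Measure.volume_eq_prod, splitObserved, (volume_preserving_piEquivPiSubtypeProd
    (fun _ : Fin d => ℝ) (fun j : Fin d => j ∈ S)).map_eq]
  -- the two volumes differ only in the `Fintype` instance on `S`
  congr!

lemma marg_eq_integral_splitObserved_symm (f : (Fin d → ℝ) → ℝ) (S : Finset (Fin d))
    (y : {j : Fin d // j ∈ S} → ℝ) :
    marg f S y = ∫ z, f ((splitObserved S).symm (y, z)) := rfl

lemma quasiMeasurePreserving_restrict (S : Finset (Fin d)) :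
    Measure.QuasiMeasurePreserving
      (fun (x : Fin d → ℝ) (j : {j : Fin d // j ∈ S}) => x j.1) :=
  Measure.quasiMeasurePreserving_fst.comp
    (measurePreserving_splitObserved S).quasiMeasurePreserving

lemma marg_univ_apply (f : (Fin d → ℝ) → ℝ) (x : Fin d → ℝ) :
    marg f Finset.univ (fun j => x j.1) = f x := by
  have : IsEmpty {j : Fin d // j ∉ Finset.univ} := ⟨fun j => j.2 (Finset.mem_univ _)⟩
  simp [marg, measureReal_def, volume_pi, Measure.pi_empty_univ]

lemma marg_congr_ae {f g : (Fin d → ℝ) → ℝ} (h : f =ᵐ[volume] g) (S : Finset (Fin d)) :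
    marg f S =ᵐ[volume] marg g S := by
  have h' := (measurePreserving_splitObserved S).symm.quasiMeasurePreserving.ae_eq h
  filter_upwards [Measure.ae_ae_of_ae_prod h'] with y hy
  exact integral_congr_ae hy

lemma marg_nonneg {f : (Fin d → ℝ) → ℝ} (hf : 0 ≤ f) (S : Finset (Fin d))
    (y : {j : Fin d // j ∈ S} → ℝ) : 0 ≤ marg f S y :=
  integral_nonneg fun _ => hf _

lemma integrable_comp_splitObserved_symm {f : (Fin d → ℝ) → ℝ} (hf : Integrable f)
    (S : Finset (Fin d)) :
    Integrable (fun p => f ((splitObserved S).symm p)) (volume.prod volume) :=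
  ((measurePreserving_splitObserved S).symm.integrable_comp_emb
    (splitObserved S).symm.measurableEmbedding).mpr hf

lemma marg_pos_ae {f : (Fin d → ℝ) → ℝ} (hf_pos : ∀ x, 0 < f x) (hf : Integrable f)
    (S : Finset (Fin d)) : ∀ᵐ y : {j : Fin d // j ∈ S} → ℝ, 0 < marg f S y := by
  filter_upwards [(integrable_comp_splitObserved_symm hf S).prod_right_ae] with y hy
  rw [marg_eq_integral_splitObserved_symm,
    integral_pos_iff_support_of_nonneg (fun z => (hf_pos _).le) hy,
    Function.support_eq_univ fun z => (hf_pos _).ne']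
  exact isOpen_univ.measure_pos volume Set.univ_nonempty

section Weighted

variable {f : (Fin d → ℝ) → ℝ} {S : Finset (Fin d)} {g : ({j : Fin d // j ∈ S} → ℝ) → ℝ}
  {C : ℝ}

lemma integrable_comp_splitObserved_symm_mul (hf : Integrable f) (hg : Measurable g)
    (hgC : ∀ y, ‖g y‖ ≤ C) :
    Integrable (fun p => f ((splitObserved S).symm p) * g p.1) (volume.prod volume) :=
  (integrable_comp_splitObserved_symm hf S).mul_bdd
    (hg.comp measurable_fst).aestronglyMeasurable (.of_forall fun p => hgC p.1)

lemma integrable_marg_mul (hf : Integrable f) (hg : Measurable g) (hgC : ∀ y, ‖g y‖ ≤ C) :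
    Integrable (fun y => marg f S y * g y) := by
  refine (integrable_comp_splitObserved_symm_mul hf hg hgC).integral_prod_left.congr
    (.of_forall fun y => ?_)
  exact integral_mul_const (g y) _

lemma integral_marg_mul (hf : Integrable f) (hg : Measurable g) (hgC : ∀ y, ‖g y‖ ≤ C) :
    ∫ y, marg f S y * g y = ∫ x, f x * g (fun j => x j.1) := by
  calc ∫ y, marg f S y * g y
      = ∫ y, ∫ z, f ((splitObserved S).symm (y, z)) * g y := by
        simp only [marg_eq_integral_splitObserved_symm, integral_mul_const]
    _ = ∫ p, f ((splitObserved S).symm p) * g p.1 ∂(volume.prod volume) :=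
        (integral_prod _ (integrable_comp_splitObserved_symm_mul hf hg hgC)).symm
    _ = ∫ x, f x * g (fun j => x j.1) := by
        rw [← (measurePreserving_splitObserved S).integral_comp']
        simp only [MeasurableEquiv.symm_apply_apply]
        rfl

end Weighted

end Marginal

lemma mul_klFun_div (a : ℝ) {b : ℝ} (hb : b ≠ 0) :
    b * klFun (a / b) = Real.log (a / b) * a - (a - b) := by
  rw [klFun_apply]
  field_simp
  ring

lemma log_div_mul_sub_log_div_mul (t : ℝ) {a b : ℝ} (ha : 0 < a) (hb : 0 < b) :
    Real.log (t / b) * t - Real.log (t / a) * t = Real.log (a / b) * t := by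
  rcases eq_or_ne t 0 with rfl | ht
  · simp
  rw [Real.log_div ht hb.ne', Real.log_div ht ha.ne', Real.log_div ha.ne' hb.ne']
  ring

lemma mul_integral_log_div_sub {α : Type*} [MeasurableSpace α] {μ : Measure α}
    {a b g : α → ℝ} (ha : ∀ᵐ x ∂μ, 0 < a x) (hb : ∀ᵐ x ∂μ, 0 < b x) (hg_nonneg : 0 ≤ g)
    (hg : Integrable g μ)
    (ha_int : Integrable
      (fun x => Real.log (g x / (∫ y, g y ∂μ) / a x) * (g x / ∫ y, g y ∂μ)) μ)
    (hb_int : Integrable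
      (fun x => Real.log (g x / (∫ y, g y ∂μ) / b x) * (g x / ∫ y, g y ∂μ)) μ) :
    (∫ y, g y ∂μ) * (∫ x, Real.log (g x / (∫ y, g y ∂μ) / b x) * (g x / ∫ y, g y ∂μ) ∂μ) -
      (∫ y, g y ∂μ) * (∫ x, Real.log (g x / (∫ y, g y ∂μ) / a x) * (g x / ∫ y, g y ∂μ) ∂μ) =
      ∫ x, Real.log (a x / b x) * g x ∂μ := by
  rcases (integral_nonneg hg_nonneg).eq_or_lt with hmass | hmass
  · -- division by `∫ g = 0` makes both integrands on the left vanish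
    have hg_zero : g =ᵐ[μ] 0 := (integral_eq_zero_iff_of_nonneg hg_nonneg hg).mp hmass.symm
    rw [← hmass, zero_mul, zero_mul, sub_zero, integral_eq_zero_of_ae]
    filter_upwards [hg_zero] with x hx
    simp [hx]
  set c := ∫ y, g y ∂μ
  have hdiff : ∀ᵐ x ∂μ, Real.log (g x / c / b x) * (g x / c) -
      Real.log (g x / c / a x) * (g x / c) = Real.log (a x / b x) * g x / c := by
    filter_upwards [ha, hb] with x hax hbx
    rw [log_div_mul_sub_log_div_mul _ hax hbx, mul_div_assoc]
  rw [← mul_sub, ← integral_sub hb_int ha_int, integral_congr_ae hdiff, integral_div,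
    mul_div_cancel₀ _ hmass.ne']

section Objective

variable {d : ℕ} {𝓜 : Finset (Finset (Fin d))}
  {w : (S : Finset (Fin d)) → ({j : Fin d // j ∈ S} → ℝ) → ℝ} {π q : (Fin d → ℝ) → ℝ}

structure IsMARWeights (𝓜 : Finset (Finset (Fin d)))
    (w : (S : Finset (Fin d)) → ({j : Fin d // j ∈ S} → ℝ) → ℝ) : Prop where
  measurable : ∀ S, Measurable (w S)
  nonneg : ∀ S y, 0 ≤ w S y
  sum_eq_one : ∀ x : Fin d → ℝ, ∑ S ∈ 𝓜, w S (fun j => x j.1) = 1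

lemma IsMARWeights.norm_le_one (hw : IsMARWeights 𝓜 w) {S : Finset (Fin d)} (hS : S ∈ 𝓜)
    (y : {j : Fin d // j ∈ S} → ℝ) : ‖w S y‖ ≤ 1 := by
  let x : Fin d → ℝ := fun j => if h : j ∈ S then y ⟨j, h⟩ else 0
  have hxy : (fun j : {j : Fin d // j ∈ S} => x j.1) = y := by
    funext j
    simp [x, j.2]
  rw [Real.norm_of_nonneg (hw.nonneg S y)]
  calc w S y = w S (fun j => x j.1) := by rw [hxy]
    _ ≤ ∑ T ∈ 𝓜, w T (fun j => x j.1) :=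
        Finset.single_le_sum (f := fun T => w T (fun j => x j.1)) (fun T _ => hw.nonneg T _) hS
    _ = 1 := hw.sum_eq_one x

lemma IsMARWeights.sum_integral_marg_mul (hw : IsMARWeights 𝓜 w) {f : (Fin d → ℝ) → ℝ}
    (hf : Integrable f) : ∑ S ∈ 𝓜, ∫ y, marg f S y * w S y = ∫ x, f x := by
  have hint : ∀ S ∈ 𝓜, Integrable fun x : Fin d → ℝ => f x * w S (fun j => x j.1) := by
    intro S hS
    have hw_meas := (hw.measurable S).comp (quasiMeasurePreserving_restrict S).measurable
    exact hf.mul_bdd hw_meas.aestronglyMeasurable (.of_forall fun x => hw.norm_le_one hS _)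
  calc ∑ S ∈ 𝓜, ∫ y, marg f S y * w S y
      = ∑ S ∈ 𝓜, ∫ x, f x * w S (fun j => x j.1) :=
        Finset.sum_congr rfl fun S hS =>
          integral_marg_mul hf (hw.measurable S) (hw.norm_le_one hS)
    _ = ∫ x, ∑ S ∈ 𝓜, f x * w S (fun j => x j.1) := (integral_finsetSum 𝓜 hint).symm
    _ = ∫ x, f x := by simp_rw [← Finset.mul_sum, hw.sum_eq_one, mul_one]

lemma marg_mul_klFun_mul_nonneg (hπ_pos : ∀ x, 0 < π x) (hq_pos : ∀ x, 0 < q x)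
    (hw : IsMARWeights 𝓜 w) (S : Finset (Fin d)) (y : {j : Fin d // j ∈ S} → ℝ) :
    0 ≤ marg q S y * klFun (marg π S y / marg q S y) * w S y := by
  have hπS := marg_nonneg (fun x => (hπ_pos x).le) S y
  have hqS := marg_nonneg (fun x => (hq_pos x).le) S y
  exact mul_nonneg (mul_nonneg hqS (klFun_nonneg (div_nonneg hπS hqS))) (hw.nonneg S y)

lemma marg_mul_klFun_mul_ae_eq (hq_pos : ∀ x, 0 < q x) (hq : Integrable q)
    (S : Finset (Fin d)) :
    (fun y => marg q S y * klFun (marg π S y / marg q S y) * w S y) =ᵐ[volume]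
      fun y => Real.log (marg π S y / marg q S y) * marg π S y * w S y -
        (marg π S y * w S y - marg q S y * w S y) := by
  filter_upwards [marg_pos_ae hq_pos hq S] with y hy
  rw [mul_klFun_div _ hy.ne']
  ring

lemma integrable_marg_mul_klFun_mul (hw : IsMARWeights 𝓜 w) (hπ : Integrable π)
    (hq_pos : ∀ x, 0 < q x) (hq : Integrable q) {S : Finset (Fin d)} (hS : S ∈ 𝓜)
    (hint : Integrable fun y => Real.log (marg π S y / marg q S y) * marg π S y * w S y) :
    Integrable fun y => marg q S y * klFun (marg π S y / marg q S y) * w S y :=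
  (hint.sub ((integrable_marg_mul hπ (hw.measurable S) (hw.norm_le_one hS)).sub
    (integrable_marg_mul hq (hw.measurable S) (hw.norm_le_one hS)))).congr
    (marg_mul_klFun_mul_ae_eq hq_pos hq S).symm

lemma qPart_eq_sum_integral_klFun (hw : IsMARWeights 𝓜 w) (hπ : Integrable π)
    (hq_pos : ∀ x, 0 < q x) (hq : Integrable q) (hmass : ∫ x, π x = ∫ x, q x)
    (hint : ∀ S ∈ 𝓜, Integrable fun y : {j : Fin d // j ∈ S} → ℝ =>
      Real.log (marg π S y / marg q S y) * marg π S y * w S y) :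
    qPart 𝓜 π w q = ∑ S ∈ 𝓜, ∫ y, marg q S y * klFun (marg π S y / marg q S y) * w S y := by
  have hterm : ∀ S ∈ 𝓜, ∫ y, marg q S y * klFun (marg π S y / marg q S y) * w S y =
      (∫ y, Real.log (marg π S y / marg q S y) * marg π S y * w S y) -
        ((∫ y, marg π S y * w S y) - ∫ y, marg q S y * w S y) := by
    intro S hS
    have hπw := integrable_marg_mul hπ (hw.measurable S) (hw.norm_le_one hS)
    have hqw := integrable_marg_mul hq (hw.measurable S) (hw.norm_le_one hS)
    rw [integral_congr_ae (marg_mul_klFun_mul_ae_eq hq_pos hq S), ← integral_sub hπw hqw]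
    exact integral_sub (hint S hS) (hπw.sub hqw)
  rw [Finset.sum_congr rfl hterm, Finset.sum_sub_distrib, Finset.sum_sub_distrib,
    hw.sum_integral_marg_mul hπ, hw.sum_integral_marg_mul hq, hmass, sub_self, sub_zero, qPart]

lemma qPart_nonneg (hw : IsMARWeights 𝓜 w) (hπ_pos : ∀ x, 0 < π x) (hπ : Integrable π)
    (hq_pos : ∀ x, 0 < q x) (hq : Integrable q) (hmass : ∫ x, π x = ∫ x, q x)
    (hint : ∀ S ∈ 𝓜, Integrable fun y : {j : Fin d // j ∈ S} → ℝ =>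
      Real.log (marg π S y / marg q S y) * marg π S y * w S y) :
    0 ≤ qPart 𝓜 π w q := by
  rw [qPart_eq_sum_integral_klFun hw hπ hq_pos hq hmass hint]
  exact Finset.sum_nonneg fun S _ =>
    integral_nonneg (marg_mul_klFun_mul_nonneg hπ_pos hq_pos hw S)

lemma ae_eq_of_qPart_eq_zero (hw : IsMARWeights 𝓜 w) (huniv : Finset.univ ∈ 𝓜)
    (hw_pos : ∀ᵐ x : Fin d → ℝ, 0 < w Finset.univ (fun j => x j.1))
    (hπ_pos : ∀ x, 0 < π x) (hπ : Integrable π)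
    (hq_pos : ∀ x, 0 < q x) (hq : Integrable q) (hmass : ∫ x, π x = ∫ x, q x)
    (hint : ∀ S ∈ 𝓜, Integrable fun y : {j : Fin d // j ∈ S} → ℝ =>
      Real.log (marg π S y / marg q S y) * marg π S y * w S y)
    (h : qPart 𝓜 π w q = 0) : ∀ᵐ x, q x = π x := by
  have hnonneg := marg_mul_klFun_mul_nonneg hπ_pos hq_pos hw
  rw [qPart_eq_sum_integral_klFun hw hπ hq_pos hq hmass hint] at h
  have hfull : ∫ y, marg q _ y * klFun (marg π _ y / marg q _ y) * w Finset.univ y = 0 :=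
    (Finset.sum_eq_zero_iff_of_nonneg fun S _ => integral_nonneg (hnonneg S)).mp h _ huniv
  have hfull_ae := (integral_eq_zero_iff_of_nonneg (hnonneg _)
    (integrable_marg_mul_klFun_mul hw hπ hq_pos hq huniv (hint _ huniv))).mp hfull
  filter_upwards [(quasiMeasurePreserving_restrict Finset.univ).ae hfull_ae, hw_pos]
    with x hx hwx
  simp only [marg_univ_apply, Pi.zero_apply] at hx
  have hkl : klFun (π x / q x) = 0 := by simpa [(hq_pos x).ne', hwx.ne'] using hx
  rw [klFun_eq_zero_iff (div_nonneg (hπ_pos x).le (hq_pos x).le),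
    div_eq_one_iff_eq (hq_pos x).ne'] at hkl
  exact hkl.symm

lemma qPart_eq_zero_of_ae_eq (h : q =ᵐ[volume] π) : qPart 𝓜 π w q = 0 := by
  refine Finset.sum_eq_zero fun S _ => integral_eq_zero_of_ae ?_
  filter_upwards [marg_congr_ae h S] with y hy
  simp [hy]

lemma objective_sub_objective_self (hw : IsMARWeights 𝓜 w) (hπ_pos : ∀ x, 0 < π x)
    (hπ : Integrable π) (hq_pos : ∀ x, 0 < q x) (hq : Integrable q)
    (hπ_int : ∀ S ∈ 𝓜, Integrable fun y : {j : Fin d // j ∈ S} → ℝ =>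
      Real.log ((marg π S y * w S y / patternProb π w S) / marg π S y) *
        (marg π S y * w S y / patternProb π w S))
    (hq_int : ∀ S ∈ 𝓜, Integrable fun y : {j : Fin d // j ∈ S} → ℝ =>
      Real.log ((marg π S y * w S y / patternProb π w S) / marg q S y) *
        (marg π S y * w S y / patternProb π w S)) :
    objective 𝓜 π w q - objective 𝓜 π w π = qPart 𝓜 π w q := by
  rw [objective, objective, qPart, ← Finset.sum_sub_distrib]
  refine Finset.sum_congr rfl fun S hS => ?_
  simp_rw [mul_assoc (Real.log _)]
  exact mul_integral_log_div_sub (marg_pos_ae hπ_pos hπ S) (marg_pos_ae hq_pos hq S)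
    (fun y => mul_nonneg (marg_nonneg (fun x => (hπ_pos x).le) S y) (hw.nonneg S y))
    (integrable_marg_mul hπ (hw.measurable S) (hw.norm_le_one hS)) (hπ_int S hS) (hq_int S hS)

end Objective

theorem stmt_13_general {d : ℕ} (𝓜 : Finset (Finset (Fin d)))
    (huniv : Finset.univ ∈ 𝓜)
    (π : (Fin d → ℝ) → ℝ) (hπpos : ∀ x, 0 < π x)
    (hπprob : ∫ x, π x = 1) (hπint : Integrable π)
    (w : (S : Finset (Fin d)) → ({j : Fin d // j ∈ S} → ℝ) → ℝ)
    (hwmeas : ∀ S, Measurable (w S))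
    (hwnonneg : ∀ S y, 0 ≤ w S y)
    (hwsum : ∀ x : Fin d → ℝ, ∑ S ∈ 𝓜, w S (fun j => x j.1) = 1)
    (hwpos : ∀ᵐ x : Fin d → ℝ, 0 < w Finset.univ (fun j => x j.1))
    (hπself : ∀ S ∈ 𝓜, Integrable (fun y : {j : Fin d // j ∈ S} → ℝ =>
      Real.log ((marg π S y * w S y / patternProb π w S) / marg π S y) *
        (marg π S y * w S y / patternProb π w S))) :
    ∀ q : (Fin d → ℝ) → ℝ, Measurable q → (∀ x, 0 < q x) →
      (∫ x, q x) = 1 → Integrable q →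
      (∀ S ∈ 𝓜, Integrable (fun y : {j : Fin d // j ∈ S} → ℝ =>
        Real.log (marg π S y / marg q S y) * marg π S y * w S y)) →
      (∀ S ∈ 𝓜, Integrable (fun y : {j : Fin d // j ∈ S} → ℝ =>
        Real.log ((marg π S y * w S y / patternProb π w S) / marg q S y) *
          (marg π S y * w S y / patternProb π w S))) →
      objective 𝓜 π w π ≤ objective 𝓜 π w q ∧
      (objective 𝓜 π w q = objective 𝓜 π w π → ∀ᵐ x : Fin d → ℝ, q x = π x) ∧
      0 ≤ qPart 𝓜 π w q ∧
      (qPart 𝓜 π w q = 0 ↔ ∀ᵐ x : Fin d → ℝ, q x = π x) := by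
  intro q _ hq_pos hq_prob hq hq_part_int hq_obj_int
  have hw : IsMARWeights 𝓜 w := ⟨hwmeas, hwnonneg, hwsum⟩
  have hmass : ∫ x, π x = ∫ x, q x := hπprob.trans hq_prob.symm
  have hdiff := objective_sub_objective_self hw hπpos hπint hq_pos hq hπself hq_obj_int
  have hnonneg := qPart_nonneg hw hπpos hπint hq_pos hq hmass hq_part_int
  have hzero : qPart 𝓜 π w q = 0 ↔ ∀ᵐ x, q x = π x :=
    ⟨ae_eq_of_qPart_eq_zero hw huniv hwpos hπpos hπint hq_pos hq hmass hq_part_int,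
      qPart_eq_zero_of_ae_eq⟩
  exact ⟨by linarith, fun h => hzero.1 (by linarith), hnonneg, hzero⟩

/-- Under MAR (the weights `w S` depend only on the observed coordinates, by construction)
and the positivity condition `P(M = fully observed | X = x) > 0` for `P_X`-a.e. `x`, the
true density `π` is the unique minimizer of `Q ↦ E_M[KL(P_{X|M}^{(M)} ‖ Q^{(M)})]` among
probability densities, and the `q`-dependent part is nonnegative, vanishing iff `q = π`. -/
theorem stmt_13 {d : ℕ} (𝓜 : Finset (Finset (Fin d)))
    (huniv : Finset.univ ∈ 𝓜)
    (π : (Fin d → ℝ) → ℝ) (hπmeas : Measurable π) (hπpos : ∀ x, 0 < π x)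
    (hπprob : ∫ x, π x = 1) (hπint : Integrable π)
    (w : (S : Finset (Fin d)) → ({j : Fin d // j ∈ S} → ℝ) → ℝ)
    (hwmeas : ∀ S, Measurable (w S))
    (hwnonneg : ∀ S y, 0 ≤ w S y)
    (hwsum : ∀ x : Fin d → ℝ, ∑ S ∈ 𝓜, w S (fun j => x j.1) = 1)
    (hwpos : ∀ᵐ x : Fin d → ℝ, 0 < w Finset.univ (fun j => x j.1))
    (hπself : ∀ S ∈ 𝓜, Integrable (fun y : {j : Fin d // j ∈ S} → ℝ =>
      Real.log ((marg π S y * w S y / patternProb π w S) / marg π S y) *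
        (marg π S y * w S y / patternProb π w S))) :
    ∀ q : (Fin d → ℝ) → ℝ, Measurable q → (∀ x, 0 < q x) →
      (∫ x, q x) = 1 → Integrable q →
      (∀ S ∈ 𝓜, Integrable (fun y : {j : Fin d // j ∈ S} → ℝ =>
        Real.log (marg π S y / marg q S y) * marg π S y * w S y)) →
      (∀ S ∈ 𝓜, Integrable (fun y : {j : Fin d // j ∈ S} → ℝ =>
        Real.log ((marg π S y * w S y / patternProb π w S) / marg q S y) *
          (marg π S y * w S y / patternProb π w S))) →
      objective 𝓜 π w π ≤ objective 𝓜 π w q ∧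
      (objective 𝓜 π w q = objective 𝓜 π w π → ∀ᵐ x : Fin d → ℝ, q x = π x) ∧
      0 ≤ qPart 𝓜 π w q ∧
      (qPart 𝓜 π w q = 0 ↔ ∀ᵐ x : Fin d → ℝ, q x = π x) :=
  stmt_13_general 𝓜 huniv π hπpos hπprob hπint w hwmeas hwnonneg hwsum hwpos hπself
end
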